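/- Let A and B be non-commuting symmetric matrices in GL₂(ℤ), and define a sequence (y_k)_{k ≥ -1} of 2×2 integer matrices by y_{-1} = B⁻¹, y_0 = I, y_1 = A and y_k = -y_{k-1}·J·y_{k-3}·J·y_{k-1} for k ≥ 2, where J = [[0,1],[-1,0]]. Then each y_k is symmetric with |det(y_k)| = 1, and for all k ≥ -1 (identifying symmetric matrices with triples), |det(y_k, y_{k+1}, y_{k+2})| = |trace(J·A·B)| ≠ 0. -/

import Mathlib

open Matrix

def Jmat : Matrix (Fin 2) (Fin 2) ℤ := !![0, 1; -1, 0]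

def ofMat (m : Matrix (Fin 2) (Fin 2) ℤ) : Fin 3 → ℤ := ![m 0 0, m 0 1, m 1 1]

def det3 (x y z : Fin 3 → ℤ) : ℤ :=
  (!![x 0, x 1, x 2; y 0, y 1, y 2; z 0, z 1, z 2]).det

/-!
Since `Jᵀ = -J`, the step `(x, z) ↦ -(z J x J z)` preserves symmetry, and
`det (-(z J x J z)) = (det z)² det x` keeps the determinants units. For symmetric `x`, `z` the
polynomial identity `det3 (y, z, -(z J x J z)) = -det z · det3 (x, y, z)` makes
`|det3 (y_k, y_{k+1}, y_{k+2})|` constant, and at `k = -1` it equals `|tr (J A B)|` because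
`B⁻¹ = det B • adj B` over `ℤ`. Finally `A B - B A = -tr (J A B) • J` for symmetric `A`, `B`.
-/

lemma Jmat_transpose : Jmatᵀ = -Jmat := by
  ext i j; fin_cases i <;> fin_cases j <;> simp [Jmat]

lemma det_Jmat : Jmat.det = 1 := by simp [Jmat]

lemma isSymm_neg_mul_Jmat_mul {x z : Matrix (Fin 2) (Fin 2) ℤ} (hx : x.IsSymm) (hz : z.IsSymm) :
    (-(z * Jmat * x * Jmat * z)).IsSymm := by
  simp only [IsSymm, transpose_neg, transpose_mul, Jmat_transpose, hx.eq, hz.eq, Matrix.mul_assoc,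
    Matrix.neg_mul, Matrix.mul_neg, neg_neg]

lemma det_neg_mul_Jmat_mul (x z : Matrix (Fin 2) (Fin 2) ℤ) :
    (-(z * Jmat * x * Jmat * z)).det = z.det ^ 2 * x.det := by
  simp only [det_neg, det_mul, det_Jmat, Fintype.card_fin]; ring

lemma det3_neg_mul_Jmat_mul {x z : Matrix (Fin 2) (Fin 2) ℤ} (hx : x.IsSymm) (hz : z.IsSymm)
    (y : Matrix (Fin 2) (Fin 2) ℤ) :
    det3 (ofMat y) (ofMat z) (ofMat (-(z * Jmat * x * Jmat * z))) =
      -z.det * det3 (ofMat x) (ofMat y) (ofMat z) := by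
  simp [det3, ofMat, Jmat, det_fin_three, det_fin_two, mul_apply, Fin.sum_univ_two,
    hx.apply 0 1, hz.apply 0 1]
  ring

lemma inv_eq_det_smul_adjugate {B : Matrix (Fin 2) (Fin 2) ℤ} (hB : IsUnit B.det) :
    B⁻¹ = B.det • B.adjugate := by
  obtain ⟨u, hu⟩ := hB
  rw [inv_def, ← hu, Ring.inverse_unit, Int.units_inv_eq_self]

lemma det3_inv_one {A B : Matrix (Fin 2) (Fin 2) ℤ} (hA : A.IsSymm) (hB : B.IsSymm)
    (hdB : IsUnit B.det) :
    det3 (ofMat B⁻¹) (ofMat 1) (ofMat A) = B.det * (Jmat * A * B).trace := by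
  rw [inv_eq_det_smul_adjugate hdB]
  simp [det3, ofMat, Jmat, adjugate_fin_two, det_fin_three, trace_fin_two, mul_apply,
    Fin.sum_univ_two, vecMul, dotProduct, hA.apply 0 1, hB.apply 0 1]
  ring

lemma commutator_eq_neg_trace_smul_Jmat {A B : Matrix (Fin 2) (Fin 2) ℤ} (hA : A.IsSymm)
    (hB : B.IsSymm) : A * B - B * A = -(Jmat * A * B).trace • Jmat := by
  ext i j
  fin_cases i <;> fin_cases j <;>
    simp [Jmat, trace_fin_two, mul_apply, Fin.sum_univ_two, vecMul, dotProduct, hA.apply 0 1,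
      hB.apply 0 1] <;> ring

lemma Nat.threeStepInduction {P : ℕ → Prop} (h0 : P 0) (h1 : P 1) (h2 : P 2)
    (hstep : ∀ k, P k → P (k + 2) → P (k + 3)) (k : ℕ) : P k := by
  induction k using Nat.strong_induction_on with
  | _ k ih =>
    match k with
    | 0 => exact h0
    | 1 => exact h1
    | 2 => exact h2
    | k + 3 => exact hstep k (ih k (by omega)) (ih (k + 2) (by omega))

/-- The sequence `y` here is shifted by one: `y (k+1)` is the paper's `y_k`. -/
theorem sequence_props (A B : Matrix (Fin 2) (Fin 2) ℤ)
    (hA : A.IsSymm) (hB : B.IsSymm)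
    (hdA : IsUnit A.det) (hdB : IsUnit B.det)
    (hAB : A * B ≠ B * A)
    (y : ℕ → Matrix (Fin 2) (Fin 2) ℤ)
    (h0 : y 0 = B⁻¹) (h1 : y 1 = 1) (h2 : y 2 = A)
    (hrec : ∀ k, y (k + 3) = -(y (k + 2) * Jmat * y k * Jmat * y (k + 2))) :
    (∀ k, (y k).IsSymm ∧ |(y k).det| = 1) ∧
      (Jmat * A * B).trace ≠ 0 ∧
      ∀ k, |det3 (ofMat (y k)) (ofMat (y (k + 1))) (ofMat (y (k + 2)))| =
        |(Jmat * A * B).trace| := by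
  have hsymm : ∀ k, (y k).IsSymm :=
    Nat.threeStepInduction (h0 ▸ hB.inv) (h1 ▸ isSymm_one) (h2 ▸ hA) fun k hk hk2 =>
      hrec k ▸ isSymm_neg_mul_Jmat_mul hk hk2
  have hdet : ∀ k, IsUnit (y k).det :=
    Nat.threeStepInduction (h0 ▸ isUnit_nonsing_inv_det B hdB) (h1 ▸ by simp) (h2 ▸ hdA)
      fun k hk hk2 => by rw [hrec k, det_neg_mul_Jmat_mul]; exact (hk2.pow 2).mul hk
  have hconst : ∀ k, |det3 (ofMat (y k)) (ofMat (y (k + 1))) (ofMat (y (k + 2)))| =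
      |det3 (ofMat (y 0)) (ofMat (y 1)) (ofMat (y 2))| := by
    intro k
    induction k with
    | zero => rfl
    | succ k ih =>
      rw [← ih, hrec k, det3_neg_mul_Jmat_mul (hsymm k) (hsymm (k + 2)), abs_mul, abs_neg,
        Int.isUnit_iff_abs_eq.mp (hdet (k + 2)), one_mul]
  refine ⟨fun k => ⟨hsymm k, Int.isUnit_iff_abs_eq.mp (hdet k)⟩, fun htr => hAB ?_, fun k => ?_⟩
  · rw [← sub_eq_zero, commutator_eq_neg_trace_smul_Jmat hA hB, htr, neg_zero, zero_smul]
  · rw [hconst k, h0, h1, h2, det3_inv_one hA hB hdB, abs_mul, Int.isUnit_iff_abs_eq.mp hdB,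
      one_mul]
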